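/- arXiv:2502.06200 — 4 statements merged into one kernel-verified Lean document; each statement's English description precedes it below -/
import Mathlib

section
/- Let f : ℝ^d → ℝ be differentiable with ∇f L-Lipschitz and ∇f(0) = 0, and suppose e^{-f} is integrable. Let μ be the probability distribution with density proportional to e^{-f}. Then the second moment of μ satisfies E_{X∼μ}[‖X‖²] ≥ d/L. -/
open MeasureTheory Set Filter

lemma lim_mul_eq_zero {g : ℝ → ℝ} {c : ℝ} (hg0 : ∀ t, 0 ≤ g t)
    (hgi : IntegrableOn g (Ioi (0:ℝ)))
    (hlim : Tendsto (fun t => t * g t) atTop (nhds c)) : c = 0 := by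
  by_contra hc
  have hc0 : 0 ≤ c := ge_of_tendsto hlim (by
    filter_upwards [eventually_gt_atTop (0:ℝ)] with t ht
    have := hg0 t; positivity)
  have hcpos : 0 < c := lt_of_le_of_ne hc0 (Ne.symm hc)
  have hev : ∀ᶠ t in atTop, c/2 < t * g t :=
    hlim.eventually (eventually_gt_nhds (show c/2 < c by linarith))
  obtain ⟨T0, hT⟩ := (hev.and (eventually_gt_atTop (1:ℝ))).exists_forall_of_atTop
  set T := max T0 1 with hTdef
  have hT1 : (1:ℝ) ≤ T := le_max_right _ _
  have hbound : ∀ t ∈ Ioi T, c/2 * t⁻¹ ≤ g t := by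
    intro t ht
    have htT0 : T0 ≤ t := le_trans (le_max_left _ _) (le_of_lt ht)
    obtain ⟨h1, _⟩ := hT t htT0
    have htpos : 0 < t := lt_of_lt_of_le one_pos (le_trans hT1 (le_of_lt ht))
    rw [mul_inv_le_iff₀ htpos, mul_comm]
    exact le_of_lt h1
  have hni : ¬ IntegrableOn (fun t : ℝ => c/2 * t⁻¹) (Ioi T) := by
    intro h
    have h2 : IntegrableOn (fun t : ℝ => t⁻¹) (Ioi T) := by
      have := h.const_mul (2/c)
      refine this.congr (Filter.Eventually.of_forall fun t => ?_)
      rcases eq_or_ne t 0 with h0|h0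
      · simp [h0]
      · field_simp
    have h3 : IntegrableOn (fun t : ℝ => t ^ (-1:ℝ)) (Ioi T) := by
      refine h2.congr (Filter.Eventually.of_forall fun t => ?_)
      simp [Real.rpow_neg_one]
    rw [integrableOn_Ioi_rpow_iff (lt_of_lt_of_le one_pos hT1)] at h3
    linarith
  apply hni
  apply Integrable.mono' (hgi.mono_set (Ioi_subset_Ioi (le_trans zero_le_one hT1)))
  · exact (measurable_const.mul measurable_inv).aestronglyMeasurable
  · filter_upwards [ae_restrict_mem measurableSet_Ioi] with t ht
    have htpos : (0:ℝ) < t := lt_of_lt_of_le one_pos (le_trans hT1 (le_of_lt ht))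
    rw [Real.norm_eq_abs, abs_of_nonneg (by positivity)]
    exact hbound t ht

lemma ibp_Ioi {g G : ℝ → ℝ} (hg : ∀ t, HasDerivAt g (G t) t) (hg0 : ∀ t, 0 ≤ g t)
    (hgi : IntegrableOn g (Ioi (0:ℝ))) (hGi : IntegrableOn (fun t => t * G t) (Ioi (0:ℝ))) :
    ∫ t in Ioi (0:ℝ), (g t + t * G t) = 0 := by
  set H' : ℝ → ℝ := fun t => g t + t * G t with hH'def
  have hH : ∀ t : ℝ, HasDerivAt (fun s => s * g s) (H' t) t := by
    intro t
    have := (hasDerivAt_id' t).mul (hg t)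
    exact this.congr_deriv (by simp [hH'def])
  have hH'i : IntegrableOn H' (Ioi (0:ℝ)) := hgi.add hGi
  have htend := intervalIntegral_tendsto_integral_Ioi 0 hH'i tendsto_id
  have heq : ∀ T : ℝ, 0 ≤ T → ∫ t in (0:ℝ)..T, H' t = T * g T := by
    intro T hT
    rw [intervalIntegral.integral_eq_sub_of_hasDerivAt (fun x _ => hH x)]
    · simp
    · rw [intervalIntegrable_iff]
      exact hH'i.mono_set (by rw [uIoc_of_le hT]; exact Ioc_subset_Ioi_self)
  have htend2 : Tendsto (fun T => T * g T) atTop (nhds (∫ t in Ioi (0:ℝ), H' t)) := by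
    apply htend.congr'
    filter_upwards [eventually_ge_atTop (0:ℝ)] with T hT
    exact heq T hT
  exact lim_mul_eq_zero hg0 hgi htend2

lemma ibp_real {g G : ℝ → ℝ} (hg : ∀ t, HasDerivAt g (G t) t) (hg0 : ∀ t, 0 ≤ g t)
    (hgi : Integrable g) (hGi : Integrable (fun t => t * G t)) :
    ∫ t : ℝ, (g t + t * G t) = 0 := by
  have hsum : Integrable (fun t : ℝ => g t + t * G t) := hgi.add hGi
  have hIoi : ∫ t in Ioi (0:ℝ), (g t + t * G t) = 0 :=
    ibp_Ioi hg hg0 hgi.integrableOn hGi.integrableOn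
  have h2 : ∫ t in Ioi (0:ℝ), (g (-t) + t * -G (-t)) = 0 := by
    apply ibp_Ioi (g := fun t => g (-t)) (G := fun t => -G (-t))
    · intro t
      exact ((hg (-t)).comp t (hasDerivAt_neg t)).congr_deriv (by ring)
    · intro t; exact hg0 (-t)
    · exact hgi.comp_neg.integrableOn
    · have h4 : Integrable (fun t : ℝ => (-t) * G (-t)) := hGi.comp_neg
      exact (h4.congr (Filter.Eventually.of_forall fun t => by ring)).integrableOn
  have h3 : ∫ t in Ioi (0:ℝ), (g (-t) + (-t) * G (-t)) = 0 := by
    have heq := integral_congr_ae (μ := volume.restrict (Ioi (0:ℝ)))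
      (f := fun t => g (-t) + (-t) * G (-t)) (g := fun t => g (-t) + t * -G (-t))
      (Filter.Eventually.of_forall fun t => by ring)
    rw [heq]; exact h2
  have hIic : ∫ t in Iic (0:ℝ), (g t + t * G t) = 0 := by
    have h5 := integral_comp_neg_Ioi (0:ℝ) (fun s => g s + s * G s)
    simp only [neg_zero] at h5
    rw [← h5]
    exact h3
  rw [← intervalIntegral.integral_Iic_add_Ioi (hsum.integrableOn) (hsum.integrableOn), hIic, hIoi, add_zero]


lemma insertNth_affine {n : ℕ} (i : Fin (n+1)) (y : Fin n → ℝ) (t : ℝ) :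
    i.insertNth t y = i.insertNth 0 y + t • (Pi.single i (1:ℝ) : Fin (n+1) → ℝ) := by
  funext j
  refine Fin.succAboveCases i ?_ ?_ j
  · simp [Fin.insertNth_apply_same]
  · intro j'
    simp [Fin.insertNth_apply_succAbove, Pi.single_eq_of_ne (Fin.succAbove_ne i j')]

lemma line_hasDerivAt {n : ℕ} (i : Fin (n+1)) (f : EuclideanSpace ℝ (Fin (n+1)) → ℝ)
    (hdiff : Differentiable ℝ f) (y : Fin n → ℝ) (t : ℝ) :
    HasDerivAt (fun s => Real.exp (-f ((WithLp.equiv 2 _).symm (i.insertNth s y))))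
      (-(gradient f ((WithLp.equiv 2 _).symm (i.insertNth t y)) i) *
        Real.exp (-f ((WithLp.equiv 2 _).symm (i.insertNth t y)))) t := by
  set X : ℝ → EuclideanSpace ℝ (Fin (n+1)) :=
    fun s => (WithLp.equiv 2 _).symm (i.insertNth s y) with hXdef
  have hc : HasDerivAt X (EuclideanSpace.single i (1:ℝ)) t := by
    have h1 : X = fun s => (WithLp.equiv 2 _).symm (i.insertNth 0 y)
        + s • EuclideanSpace.single i (1:ℝ) := by
      funext s
      rw [hXdef]
      simp only [insertNth_affine i y s, WithLp.equiv_symm_apply, WithLp.toLp_add, WithLp.toLp_smul,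
        PiLp.toLp_single]
    rw [h1]
    simpa using ((hasDerivAt_id t).smul_const (EuclideanSpace.single i (1:ℝ))).const_add
      ((WithLp.equiv 2 _).symm (i.insertNth 0 y))
  have hf : HasDerivAt (fun s => f (X s)) (gradient f (X t) i) t := by
    have h2 := ((hdiff (X t)).hasGradientAt.hasFDerivAt).comp_hasDerivAt t hc
    refine h2.congr_deriv ?_
    have := EuclideanSpace.inner_single_right (𝕜 := ℝ) i (1:ℝ) (gradient f (X t))
    simp only [InnerProductSpace.toDual_apply_apply]
    rw [real_inner_comm]
    rw [real_inner_comm, this]; simp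
  have := ((hf.neg).exp)
  exact this.congr_deriv (by simp only [Pi.neg_apply]; ring)

lemma coord_identity {n : ℕ} (i : Fin (n+1)) (f : EuclideanSpace ℝ (Fin (n+1)) → ℝ)
    (hdiff : Differentiable ℝ f)
    (hint : Integrable (fun x => Real.exp (-f x)))
    (hint2 : Integrable (fun x : EuclideanSpace ℝ (Fin (n+1)) =>
      x i * gradient f x i * Real.exp (-f x))) :
    ∫ x : EuclideanSpace ℝ (Fin (n+1)), x i * gradient f x i * Real.exp (-f x)
      = ∫ x : EuclideanSpace ℝ (Fin (n+1)), Real.exp (-f x) := by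
  classical
  set ψ := MeasurableEquiv.piFinSuccAbove (fun _ : Fin (n+1) => ℝ) i with hψdef
  set eE := (MeasurableEquiv.toLp 2 (Fin (n+1) → ℝ)).symm with heEdef
  set Φ : (ℝ × (Fin n → ℝ)) ≃ᵐ EuclideanSpace ℝ (Fin (n+1)) := ψ.symm.trans eE.symm with hΦdef
  have hΦmp : MeasurePreserving Φ volume volume := by
    exact ((EuclideanSpace.volume_preserving_symm_measurableEquiv_toLp (Fin (n+1))).symm).comp
      ((volume_preserving_piFinSuccAbove (fun _ : Fin (n+1) => ℝ) i).symm)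
  have hΦz : ∀ z : ℝ × (Fin n → ℝ), Φ z = (WithLp.equiv 2 _).symm (i.insertNth z.1 z.2) := by
    intro z
    rfl
  have hXi : ∀ z : ℝ × (Fin n → ℝ), (Φ z) i = z.1 := by
    intro z
    rw [hΦz]
    simp [Fin.insertNth_apply_same]
  set K1 : EuclideanSpace ℝ (Fin (n+1)) → ℝ := fun x => Real.exp (-f x) with hK1def
  set K2 : EuclideanSpace ℝ (Fin (n+1)) → ℝ := fun x => x i * gradient f x i * Real.exp (-f x)
    with hK2def
  have hK1c : Integrable (fun z => K1 (Φ z)) := by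
    exact (hΦmp.integrable_comp_emb Φ.measurableEmbedding).mpr hint
  have hK2c : Integrable (fun z => K2 (Φ z)) := by
    exact (hΦmp.integrable_comp_emb Φ.measurableEmbedding).mpr hint2
  have h1 : ∫ z, K1 (Φ z) = ∫ x, K1 x := hΦmp.integral_comp Φ.measurableEmbedding _
  have h2 : ∫ z, K2 (Φ z) = ∫ x, K2 x := hΦmp.integral_comp Φ.measurableEmbedding _
  rw [← h1, ← h2]
  rw [Measure.volume_eq_prod] at hK1c hK2c ⊢
  rw [integral_prod_symm _ hK1c, integral_prod_symm _ hK2c]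
  apply integral_congr_ae
  filter_upwards [hK1c.prod_left_ae, hK2c.prod_left_ae] with y hy1 hy2
  set g : ℝ → ℝ := fun t => Real.exp (-f (Φ (t, y))) with hgdef
  set G : ℝ → ℝ := fun t => -(gradient f (Φ (t, y)) i) * g t with hGdef
  have hder : ∀ t, HasDerivAt g (G t) t := by
    intro t
    have := line_hasDerivAt i f hdiff y t
    simp only [hgdef, hGdef]
    convert this using 2 <;> rw [hΦz (_, y)]
  have htG : Integrable (fun t => t * G t) := by
    refine (hy2.neg).congr (Filter.Eventually.of_forall fun t => ?_)
    simp only [hK2def, hGdef, hXi (t, y), Pi.neg_apply]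
    ring
  have h0 := ibp_real hder (fun t => Real.exp_nonneg _) hy1 htG
  rw [integral_add hy1 htG] at h0
  have h3 : ∫ t, t * G t = -∫ t, K2 (Φ (t, y)) := by
    rw [← integral_neg]
    refine integral_congr_ae (Filter.Eventually.of_forall fun t => ?_)
    simp only [hK2def, hGdef, hXi (t, y)]
    ring
  rw [h3] at h0
  have : ∫ t, K2 (Φ (t, y)) = ∫ t, g t := by linarith
  exact this

/-- For an `L`-log-smooth distribution `μ` with density proportional to `e^{-f}`,
where `∇f(0) = 0`, the second moment satisfies `E[‖X‖²] ≥ d/L`.  Stated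
multiplicatively via unnormalized integrals (in `ℝ≥0∞` to also cover an
infinite second moment). -/
theorem second_moment_lower_bound (d : ℕ) (L : ℝ) (hL : 0 < L)
    (f : EuclideanSpace ℝ (Fin d) → ℝ)
    (hdiff : Differentiable ℝ f)
    (hlip : LipschitzWith (Real.toNNReal L) (gradient f))
    (hgrad0 : gradient f 0 = 0)
    (hint : Integrable (fun x => Real.exp (-f x))) :
    ENNReal.ofReal ((d : ℝ) / L) * ∫⁻ x, ENNReal.ofReal (Real.exp (-f x)) ≤
      ∫⁻ x, ENNReal.ofReal (‖x‖ ^ 2 * Real.exp (-f x)) := by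
  obtain _ | n := d
  · simp
  by_cases hfin : (∫⁻ x : EuclideanSpace ℝ (Fin (n+1)),
      ENNReal.ofReal (‖x‖ ^ 2 * Real.exp (-f x))) = ⊤
  · rw [hfin]; exact le_top
  -- basic continuity facts
  have hfc : Continuous f := hdiff.continuous
  have hgc : Continuous (gradient f) := hlip.continuous
  have hI2c : Continuous (fun x : EuclideanSpace ℝ (Fin (n+1)) => ‖x‖ ^ 2 * Real.exp (-f x)) := by
    continuity
  have hI2nn : ∀ x : EuclideanSpace ℝ (Fin (n+1)), 0 ≤ ‖x‖ ^ 2 * Real.exp (-f x) := by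
    intro x; positivity
  have hint2 : Integrable (fun x : EuclideanSpace ℝ (Fin (n+1)) => ‖x‖ ^ 2 * Real.exp (-f x)) := by
    refine ⟨hI2c.aestronglyMeasurable, ?_⟩
    rw [hasFiniteIntegral_iff_ofReal (Filter.Eventually.of_forall hI2nn)]
    exact lt_top_iff_ne_top.mpr hfin
  -- gradient bound
  have hgb : ∀ x : EuclideanSpace ℝ (Fin (n+1)), ‖gradient f x‖ ≤ L * ‖x‖ := by
    intro x
    have := hlip.dist_le_mul x 0
    rw [dist_eq_norm, hgrad0, sub_zero, dist_eq_norm, sub_zero] at this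
    rwa [Real.coe_toNNReal L hL.le] at this
  -- per coordinate integrand bound and integrability
  have hcoordbd : ∀ (i : Fin (n+1)) (x : EuclideanSpace ℝ (Fin (n+1))),
      |x i * gradient f x i * Real.exp (-f x)| ≤ L * (‖x‖ ^ 2 * Real.exp (-f x)) := by
    intro i x
    have h1 : |x i| ≤ ‖x‖ := by
      have h := abs_real_inner_le_norm x (EuclideanSpace.single i (1:ℝ))
      simpa [EuclideanSpace.inner_single_right, EuclideanSpace.norm_single] using h
    have h2 : |gradient f x i| ≤ L * ‖x‖ := by
      have h := abs_real_inner_le_norm (gradient f x) (EuclideanSpace.single i (1:ℝ))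
      simp only [EuclideanSpace.inner_single_right, EuclideanSpace.norm_single] at h
      calc |gradient f x i| ≤ ‖gradient f x‖ := by simpa using h
        _ ≤ L * ‖x‖ := hgb x
    have hexp : (0:ℝ) < Real.exp (-f x) := Real.exp_pos _
    rw [abs_mul, abs_mul, abs_of_pos hexp]
    calc |x i| * |gradient f x i| * Real.exp (-f x)
        ≤ ‖x‖ * (L * ‖x‖) * Real.exp (-f x) := by
          apply mul_le_mul_of_nonneg_right _ hexp.le
          exact mul_le_mul h1 h2 (abs_nonneg _) (norm_nonneg _)
      _ = L * (‖x‖ ^ 2 * Real.exp (-f x)) := by ring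
  have hci : ∀ i : Fin (n+1), Integrable (fun x : EuclideanSpace ℝ (Fin (n+1)) =>
      x i * gradient f x i * Real.exp (-f x)) := by
    intro i
    apply Integrable.mono' (hint2.const_mul L)
    · apply Continuous.aestronglyMeasurable
      exact (((EuclideanSpace.proj (𝕜 := ℝ) i).continuous).mul
        (((EuclideanSpace.proj (𝕜 := ℝ) i).continuous).comp hgc)).mul
        (Real.continuous_exp.comp hfc.neg)
    · exact Filter.Eventually.of_forall fun x => by
        rw [Real.norm_eq_abs]; exact hcoordbd i x
  have hcoord : ∀ i : Fin (n+1),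
      ∫ x : EuclideanSpace ℝ (Fin (n+1)), x i * gradient f x i * Real.exp (-f x)
        = ∫ x : EuclideanSpace ℝ (Fin (n+1)), Real.exp (-f x) := fun i =>
    coord_identity i f hdiff hint (hci i)
  -- sum over coordinates
  have hSsum : ∫ x : EuclideanSpace ℝ (Fin (n+1)),
      (∑ i : Fin (n+1), x i * gradient f x i * Real.exp (-f x))
      = ((n:ℝ)+1) * ∫ x : EuclideanSpace ℝ (Fin (n+1)), Real.exp (-f x) := by
    rw [integral_finset_sum Finset.univ (fun i _ => hci i)]
    simp only [hcoord]
    rw [Finset.sum_const, Finset.card_univ, Fintype.card_fin, nsmul_eq_mul]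
    push_cast
    ring
  have hSle : ∀ x : EuclideanSpace ℝ (Fin (n+1)),
      (∑ i : Fin (n+1), x i * gradient f x i * Real.exp (-f x))
        ≤ L * (‖x‖ ^ 2 * Real.exp (-f x)) := by
    intro x
    rw [← Finset.sum_mul]
    have hinner : ∑ i : Fin (n+1), x i * gradient f x i = (inner ℝ x (gradient f x) : ℝ) := by
      rw [PiLp.inner_apply]; simp [RCLike.inner_apply, conj_trivial, mul_comm]
    have hcs : (inner ℝ x (gradient f x) : ℝ) ≤ ‖x‖ * (L * ‖x‖) :=
      (real_inner_le_norm _ _).trans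
        (mul_le_mul_of_nonneg_left (hgb x) (norm_nonneg _))
    rw [hinner]
    calc (inner ℝ x (gradient f x) : ℝ) * Real.exp (-f x) ≤ (‖x‖ * (L * ‖x‖)) * Real.exp (-f x) :=
          mul_le_mul_of_nonneg_right hcs (Real.exp_pos _).le
      _ = L * (‖x‖ ^ 2 * Real.exp (-f x)) := by ring
  have hSint : Integrable (fun x : EuclideanSpace ℝ (Fin (n+1)) =>
      ∑ i : Fin (n+1), x i * gradient f x i * Real.exp (-f x)) :=
    integrable_finset_sum Finset.univ (fun i _ => hci i)
  have hmain : ((n:ℝ)+1) * (∫ x : EuclideanSpace ℝ (Fin (n+1)), Real.exp (-f x))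
      ≤ L * ∫ x : EuclideanSpace ℝ (Fin (n+1)), ‖x‖ ^ 2 * Real.exp (-f x) := by
    rw [← hSsum, ← MeasureTheory.integral_const_mul]
    exact integral_mono hSint (hint2.const_mul L) hSle
  -- pass to ENNReal
  have hI0nn : (0:ℝ) ≤ ∫ x : EuclideanSpace ℝ (Fin (n+1)), Real.exp (-f x) :=
    integral_nonneg fun x => (Real.exp_pos _).le
  have hl1 : (∫⁻ x : EuclideanSpace ℝ (Fin (n+1)), ENNReal.ofReal (Real.exp (-f x)))
      = ENNReal.ofReal (∫ x : EuclideanSpace ℝ (Fin (n+1)), Real.exp (-f x)) :=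
    (ofReal_integral_eq_lintegral_ofReal hint
      (Filter.Eventually.of_forall fun x => (Real.exp_pos _).le)).symm
  have hl2 : (∫⁻ x : EuclideanSpace ℝ (Fin (n+1)), ENNReal.ofReal (‖x‖ ^ 2 * Real.exp (-f x)))
      = ENNReal.ofReal (∫ x : EuclideanSpace ℝ (Fin (n+1)), ‖x‖ ^ 2 * Real.exp (-f x)) :=
    (ofReal_integral_eq_lintegral_ofReal hint2
      (Filter.Eventually.of_forall hI2nn)).symm
  rw [hl1, hl2, ← ENNReal.ofReal_mul (by positivity)]
  apply ENNReal.ofReal_le_ofReal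
  rw [div_mul_eq_mul_div, div_le_iff₀ hL]
  push_cast
  nlinarith [hmain]
end

section
/- Let u, v ∈ ℝ^d with ‖u‖ = ‖v‖ = 3R/4, let 0 < r₂ ≤ R/4, and set ℓ = √((3R/4)² − 2r₂²)/(3R/4). If x ∈ ℝ^d satisfies ‖x − u‖ ≤ r₂, then ⟨x, u⟩/(‖x‖·‖u‖) ≥ ℓ. Consequently, if the spherical caps C_u = {y : ‖y‖ = 3R/4, ⟨y,u⟩/(‖y‖‖u‖) ≥ ℓ} and C_v (defined analogously) are disjoint, then the balls B(u, r₂) and B(v, r₂) are disjoint. -/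
open RealInnerProductSpace

lemma cap_aux (d : ℕ) (R r₂ : ℝ) (hr : 0 < r₂) (hR : 4 * r₂ ≤ R)
    (u x : EuclideanSpace ℝ (Fin d)) (hu : ‖u‖ = 3 * R / 4)
    (hx : ‖x - u‖ ≤ r₂) :
    Real.sqrt ((3 * R / 4) ^ 2 - 2 * r₂ ^ 2) / (3 * R / 4) ≤ ⟪x, u⟫ / (‖x‖ * ‖u‖) := by
  have h3 : 3 * r₂ ≤ 3 * R / 4 := by linarith
  have hs0 : (0:ℝ) < 3 * R / 4 := by linarith
  have habs := abs_le.mp (abs_norm_sub_norm_le x u)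
  have hxn : 2 * r₂ ≤ ‖x‖ := by
    rw [hu] at habs; linarith [habs.1]
  have hx0 : (0:ℝ) < ‖x‖ := by linarith
  have hnn : (0:ℝ) ≤ (3 * R / 4) ^ 2 - 2 * r₂ ^ 2 := by nlinarith
  have hc : Real.sqrt ((3 * R / 4) ^ 2 - 2 * r₂ ^ 2) ^ 2 = (3 * R / 4) ^ 2 - 2 * r₂ ^ 2 :=
    Real.sq_sqrt hnn
  have hc0 : 0 ≤ Real.sqrt ((3 * R / 4) ^ 2 - 2 * r₂ ^ 2) := Real.sqrt_nonneg _
  have hinner : ‖x - u‖ ^ 2 = ‖x‖ ^ 2 - 2 * ⟪x, u⟫ + ‖u‖ ^ 2 := norm_sub_sq_real x u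
  have hsq : ‖x - u‖ ^ 2 ≤ r₂ ^ 2 := by
    have := norm_nonneg (x - u); nlinarith
  rw [hu] at hinner
  have hkey : ‖x‖ * Real.sqrt ((3 * R / 4) ^ 2 - 2 * r₂ ^ 2) ≤ ⟪x, u⟫ := by
    nlinarith [sq_nonneg (‖x‖ - Real.sqrt ((3 * R / 4) ^ 2 - 2 * r₂ ^ 2))]
  rw [hu, div_le_div_iff₀ hs0 (by positivity)]
  nlinarith [mul_le_mul_of_nonneg_right hkey hs0.le]

theorem caps_disjoint_implies_balls_disjoint (d : ℕ) (R r₂ : ℝ)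
    (hr : 0 < r₂) (hR : 4 * r₂ ≤ R)
    (u v : EuclideanSpace ℝ (Fin d))
    (hu : ‖u‖ = 3 * R / 4) (hv : ‖v‖ = 3 * R / 4) :
    (∀ x : EuclideanSpace ℝ (Fin d), ‖x - u‖ ≤ r₂ →
      Real.sqrt ((3 * R / 4) ^ 2 - 2 * r₂ ^ 2) / (3 * R / 4) ≤ ⟪x, u⟫ / (‖x‖ * ‖u‖)) ∧
    (Disjoint
        {y : EuclideanSpace ℝ (Fin d) | ‖y‖ = 3 * R / 4 ∧
          Real.sqrt ((3 * R / 4) ^ 2 - 2 * r₂ ^ 2) / (3 * R / 4) ≤ ⟪y, u⟫ / (‖y‖ * ‖u‖)}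
        {y : EuclideanSpace ℝ (Fin d) | ‖y‖ = 3 * R / 4 ∧
          Real.sqrt ((3 * R / 4) ^ 2 - 2 * r₂ ^ 2) / (3 * R / 4) ≤ ⟪y, v⟫ / (‖y‖ * ‖v‖)} →
      Disjoint (Metric.closedBall u r₂) (Metric.closedBall v r₂)) := by
  refine ⟨fun x hx => cap_aux d R r₂ hr hR u x hu hx, fun hdisj => ?_⟩
  rw [Set.disjoint_left] at hdisj ⊢
  intro x hxu hxv
  rw [Metric.mem_closedBall, dist_eq_norm] at hxu hxv
  have habs := abs_le.mp (abs_norm_sub_norm_le x u)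
  have hx0 : (0:ℝ) < ‖x‖ := by
    rw [hu] at habs; linarith [habs.2]
  have hs0 : (0:ℝ) < 3 * R / 4 := by linarith
  set c : ℝ := (3 * R / 4) / ‖x‖ with hcdef
  have hc0 : 0 < c := div_pos hs0 hx0
  set y : EuclideanSpace ℝ (Fin d) := c • x with hydef
  have hy : ‖y‖ = 3 * R / 4 := by
    rw [hydef, norm_smul, Real.norm_eq_abs, abs_of_pos hc0, hcdef,
      div_mul_cancel₀ _ (ne_of_gt hx0)]
  have hratio : ∀ w : EuclideanSpace ℝ (Fin d), ‖w‖ = 3 * R / 4 →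
      ⟪y, w⟫ / (‖y‖ * ‖w‖) = ⟪x, w⟫ / (‖x‖ * ‖w‖) := by
    intro w hw
    have hw0 : ‖w‖ ≠ 0 := by rw [hw]; positivity
    have hR0 : R ≠ 0 := by nlinarith
    rw [hydef, real_inner_smul_left, norm_smul, Real.norm_eq_abs, abs_of_pos hc0, hcdef]
    field_simp
  exact hdisj (a := y)
    ⟨hy, by rw [hratio u hu]; exact cap_aux d R r₂ hr hR u x hu hxu⟩
    ⟨hy, by rw [hratio v hv]; exact cap_aux d R r₂ hr hR v x hv hxv⟩
end

section
/- Let μ be a probability distribution on ℝ^d with density p_μ(x) = e^{-f(x)}/Z where f is L-smooth (i.e., ∇f is L-Lipschitz) and Z = ∫ e^{-f}. Then p_μ(x) ≤ (L/(2π))^{d/2} for all x ∈ ℝ^d, provided f attains its minimum at some point x* (where ∇f(x*) = 0). -/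
open MeasureTheory Real GaussianFourier

/-- Descent lemma: if the gradient is L-Lipschitz and vanishes at `xstar`, then
`f (xstar + v) ≤ f xstar + L/2 * ‖v‖²`. -/
lemma descent_lemma_aux (d : ℕ) (L : ℝ) (hL : 0 < L)
    (f : EuclideanSpace ℝ (Fin d) → ℝ)
    (hdiff : Differentiable ℝ f)
    (hlip : LipschitzWith (Real.toNNReal L) (gradient f))
    (xstar : EuclideanSpace ℝ (Fin d))
    (hgrad : gradient f xstar = 0) (v : EuclideanSpace ℝ (Fin d)) :
    f (xstar + v) ≤ f xstar + L / 2 * ‖v‖ ^ 2 := by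
  set h : ℝ → ℝ := fun t => f (xstar + t • v) - f xstar - L / 2 * ‖v‖ ^ 2 * t ^ 2 with hh_def
  have hγ : ∀ t : ℝ, HasDerivAt (fun t : ℝ => xstar + t • v) v t := by
    intro t
    simpa using ((hasDerivAt_id t).smul_const v).const_add xstar
  have hg : ∀ t : ℝ, HasDerivAt (fun t : ℝ => f (xstar + t • v))
      (inner ℝ (gradient f (xstar + t • v)) v : ℝ) t := by
    intro t
    have hfd := hasGradientAt_iff_hasFDerivAt.mp (hdiff (xstar + t • v)).hasGradientAt
    have := hfd.comp_hasDerivAt t (hγ t)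
    simp at this
    rw [show inner ℝ (gradient f (xstar + t • v)) v = fderiv ℝ f (xstar + t • v) v by
      rw [gradient, InnerProductSpace.toDual_symm_apply]]
    exact this
  have hh : ∀ t : ℝ, HasDerivAt h
      ((inner ℝ (gradient f (xstar + t • v)) v : ℝ) - L / 2 * ‖v‖ ^ 2 * (2 * t)) t := by
    intro t
    have h2 : HasDerivAt (fun t : ℝ => L / 2 * ‖v‖ ^ 2 * t ^ 2)
        (L / 2 * ‖v‖ ^ 2 * (2 * t)) t := by
      have := (hasDerivAt_pow 2 t).const_mul (L / 2 * ‖v‖ ^ 2)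
      simpa [mul_comm, mul_assoc, mul_left_comm] using this
    exact (((hg t).sub_const (f xstar)).sub h2)
  have hderiv_le : ∀ t ∈ Set.Ioo (0 : ℝ) 1, deriv h t ≤ 0 := by
    intro t ht
    rw [(hh t).deriv]
    have h1 : (inner ℝ (gradient f (xstar + t • v)) v : ℝ) ≤ L * t * ‖v‖ ^ 2 := by
      have hb : ‖gradient f (xstar + t • v)‖ ≤ L * (t * ‖v‖) := by
        have := hlip.dist_le_mul (xstar + t • v) xstar
        rw [hgrad, dist_zero_right] at this
        have hdist : dist (xstar + t • v) xstar = t * ‖v‖ := by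
          rw [dist_eq_norm]
          simp [norm_smul, abs_of_pos ht.1]
        rw [hdist] at this
        calc ‖gradient f (xstar + t • v)‖ ≤ (Real.toNNReal L : ℝ) * (t * ‖v‖) := this
          _ = L * (t * ‖v‖) := by rw [Real.coe_toNNReal _ hL.le]
      calc (inner ℝ (gradient f (xstar + t • v)) v : ℝ)
          ≤ ‖gradient f (xstar + t • v)‖ * ‖v‖ := real_inner_le_norm _ _
        _ ≤ L * (t * ‖v‖) * ‖v‖ := by
            apply mul_le_mul_of_nonneg_right hb (norm_nonneg _)
        _ = L * t * ‖v‖ ^ 2 := by ring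
    nlinarith
  have hanti : AntitoneOn h (Set.Icc 0 1) := by
    apply antitoneOn_of_deriv_nonpos (convex_Icc 0 1)
    · exact fun t _ => ((hh t).differentiableAt.continuousAt).continuousWithinAt
    · intro t _
      exact ((hh t).differentiableAt).differentiableWithinAt
    · intro t ht
      rw [interior_Icc] at ht
      exact hderiv_le t ht
  have h10 : h 1 ≤ h 0 := hanti (Set.mem_Icc.mpr ⟨le_refl 0, zero_le_one⟩)
    (Set.mem_Icc.mpr ⟨zero_le_one, le_refl 1⟩) zero_le_one
  simp only [hh_def, one_smul, zero_smul, add_zero, one_pow] at h10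
  nlinarith [h10]

theorem density_upper_bound (d : ℕ) (L : ℝ) (hL : 0 < L)
    (f : EuclideanSpace ℝ (Fin d) → ℝ)
    (hdiff : Differentiable ℝ f)
    (hlip : LipschitzWith (Real.toNNReal L) (gradient f))
    (hint : Integrable (fun x => Real.exp (-f x)))
    (xstar : EuclideanSpace ℝ (Fin d))
    (hmin : ∀ y, f xstar ≤ f y)
    (hgrad : gradient f xstar = 0) :
    ∀ x, Real.exp (-f x) / (∫ y, Real.exp (-f y)) ≤ (L / (2 * Real.pi)) ^ ((d : ℝ) / 2) := by
  intro x
  have hπ : (0 : ℝ) < Real.pi := Real.pi_pos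
  set C : ℝ := (2 * Real.pi / L) ^ ((d : ℝ) / 2) with hC_def
  have hCpos : 0 < C := Real.rpow_pos_of_pos (by positivity) _
  have hb : (0 : ℝ) < L / 2 := by positivity
  -- Gaussian integrability
  have hgauss_int : Integrable (fun y : EuclideanSpace ℝ (Fin d) =>
      Real.exp (-(L / 2) * ‖y‖ ^ 2)) := by
    have h := (integrable_cexp_neg_mul_sq_norm_add
      (V := EuclideanSpace ℝ (Fin d)) (b := (L / 2 : ℂ)) (by simpa using hb) 0 0).norm
    refine h.congr ?_
    filter_upwards with y
    rw [show (-(L / 2 : ℂ) * (‖y‖ : ℂ) ^ 2 +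
          0 * ((inner ℝ (0 : EuclideanSpace ℝ (Fin d)) y : ℝ) : ℂ)) =
        ((-(L / 2) * ‖y‖ ^ 2 : ℝ) : ℂ) by push_cast; ring,
      ← Complex.ofReal_exp, Complex.norm_real, Real.norm_eq_abs,
      abs_of_pos (Real.exp_pos _)]
  have hgauss_val : ∫ y : EuclideanSpace ℝ (Fin d), Real.exp (-(L / 2) * ‖y‖ ^ 2) = C := by
    rw [integral_rexp_neg_mul_sq_norm hb]
    have : Module.finrank ℝ (EuclideanSpace ℝ (Fin d)) = d := by simp
    rw [this, hC_def]
    congr 1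
    field_simp
  -- lower bound for the partition function
  have hlow : ∀ y, Real.exp (-f xstar) * Real.exp (-(L / 2) * ‖y - xstar‖ ^ 2) ≤
      Real.exp (-f y) := by
    intro y
    have hdesc := descent_lemma_aux d L hL f hdiff hlip xstar hgrad (y - xstar)
    rw [add_sub_cancel] at hdesc
    rw [← Real.exp_add]
    apply Real.exp_le_exp.2
    nlinarith
  have hint_low : Integrable (fun y : EuclideanSpace ℝ (Fin d) =>
      Real.exp (-f xstar) * Real.exp (-(L / 2) * ‖y - xstar‖ ^ 2)) := by
    apply Integrable.const_mul
    exact hgauss_int.comp_sub_right xstar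
  have hZ_low : Real.exp (-f xstar) * C ≤ ∫ y, Real.exp (-f y) := by
    have := integral_mono hint_low hint hlow
    rwa [integral_const_mul, integral_sub_right_eq_self
      (fun y : EuclideanSpace ℝ (Fin d) => Real.exp (-(L / 2) * ‖y‖ ^ 2)) xstar,
      hgauss_val] at this
  have hZpos : 0 < ∫ y, Real.exp (-f y) :=
    lt_of_lt_of_le (by positivity) hZ_low
  rw [div_le_iff₀ hZpos]
  have hinv : (L / (2 * Real.pi)) ^ ((d : ℝ) / 2) = C⁻¹ := by
    rw [hC_def, ← Real.inv_rpow (by positivity), inv_div]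
  calc Real.exp (-f x) ≤ Real.exp (-f xstar) := Real.exp_le_exp.2 (neg_le_neg (hmin x))
    _ = C⁻¹ * (Real.exp (-f xstar) * C) := by field_simp
    _ ≤ (L / (2 * Real.pi)) ^ ((d : ℝ) / 2) * ∫ y, Real.exp (-f y) := by
        rw [hinv]
        exact mul_le_mul_of_nonneg_left hZ_low (by positivity)
end

section
/- Let p(x) = w₁·g₁(x) + w₂·g₂(x) be the density of a mixture of two Gaussians N(u₁, Σ) and N(u₂, Σ) on ℝ^d with the same positive definite covariance Σ and weights w₁, w₂ > 0, w₁ + w₂ = 1. Then for every x, the Hessian of −log p satisfies −(1/4)·Σ⁻¹(u₁−u₂)(u₁−u₂)ᵀΣ⁻¹ + Σ⁻¹ ⪯ −∇²log p(x) ⪯ Σ⁻¹. -/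
open Matrix

/-- Density of the Gaussian `N(u, S)` on `ℝ^d`. -/
noncomputable def gaussDensity (d : ℕ) (u : Fin d → ℝ) (S : Matrix (Fin d) (Fin d) ℝ)
    (x : Fin d → ℝ) : ℝ :=
  (2 * Real.pi) ^ (-(d : ℝ) / 2) * S.det ^ (-(1 : ℝ) / 2) *
    Real.exp (-((x - u) ⬝ᵥ (S⁻¹ *ᵥ (x - u))) / 2)

private lemma exp_hasDerivAt (b : ℝ) (t : ℝ) :
    HasDerivAt (fun t : ℝ => Real.exp (-(b * t))) (-b * Real.exp (-(b * t))) t := by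
  have h : HasDerivAt (fun t : ℝ => -(b * t)) (-b) t := by
    simpa using ((hasDerivAt_id t).const_mul b).fun_neg
  simpa [mul_comm] using h.exp

private lemma key (Q b₁ b₂ B₁ B₂ : ℝ) (h₁ : 0 < B₁) (h₂ : 0 < B₂) :
    deriv (deriv (fun t : ℝ => -(Q * t ^ 2 / 2) +
      Real.log (B₁ * Real.exp (-(b₁ * t)) + B₂ * Real.exp (-(b₂ * t))))) 0
    = -Q + B₁ * B₂ * (b₁ - b₂) ^ 2 / (B₁ + B₂) ^ 2 := by
  set D : ℝ → ℝ := fun t => B₁ * Real.exp (-(b₁ * t)) + B₂ * Real.exp (-(b₂ * t)) with hD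
  set N : ℝ → ℝ := fun t => B₁ * (-b₁ * Real.exp (-(b₁ * t))) + B₂ * (-b₂ * Real.exp (-(b₂ * t))) with hN
  have hDpos : ∀ t, 0 < D t := fun t => by positivity
  have hDder : ∀ t, HasDerivAt D (N t) t := fun t =>
    ((exp_hasDerivAt b₁ t).const_mul B₁).add ((exp_hasDerivAt b₂ t).const_mul B₂)
  have hNder : ∀ t, HasDerivAt N (B₁ * (-b₁ * (-b₁ * Real.exp (-(b₁ * t)))) +
      B₂ * (-b₂ * (-b₂ * Real.exp (-(b₂ * t))))) t := fun t =>
    (((exp_hasDerivAt b₁ t).const_mul (-b₁)).const_mul B₁).add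
      (((exp_hasDerivAt b₂ t).const_mul (-b₂)).const_mul B₂)
  have h1 : ∀ t : ℝ, HasDerivAt (fun t : ℝ => -(Q * t ^ 2 / 2) + Real.log (D t))
      (-(Q * t) + N t / D t) t := by
    intro t
    have ha : HasDerivAt (fun t : ℝ => -(Q * t ^ 2 / 2)) (-(Q * t)) t := by
      have : HasDerivAt (fun t : ℝ => t ^ 2) (2 * t) t := by
        simpa using hasDerivAt_pow 2 t
      have := ((this.const_mul Q).div_const 2).fun_neg
      exact this.congr_deriv (by ring)
    exact ha.add ((hDder t).log (hDpos t).ne')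
  have hderiv1 : deriv (fun t : ℝ => -(Q * t ^ 2 / 2) + Real.log (D t))
      = fun t => -(Q * t) + N t / D t := by
    funext t; exact (h1 t).deriv
  rw [hderiv1]
  have ha : HasDerivAt (fun t : ℝ => -(Q * t)) (-Q) (0 : ℝ) := by
    simpa using ((hasDerivAt_id (0:ℝ)).const_mul Q).fun_neg
  have hb : HasDerivAt (fun t : ℝ => N t / D t)
      (((B₁ * (-b₁ * (-b₁ * Real.exp (-(b₁ * 0)))) + B₂ * (-b₂ * (-b₂ * Real.exp (-(b₂ * 0))))) * D 0
        - N 0 * N 0) / D 0 ^ 2) 0 :=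
    (hNder 0).div (hDder 0) (hDpos 0).ne'
  have := (ha.fun_add hb).deriv
  rw [this]
  have hD0 : D 0 = B₁ + B₂ := by simp [hD]
  have hN0 : N 0 = B₁ * (-b₁) + B₂ * (-b₂) := by simp [hN]
  rw [hD0, hN0]
  have hsum : (0:ℝ) < B₁ + B₂ := by linarith
  simp only [mul_zero, neg_zero, Real.exp_zero]
  field_simp
  ring

/-- For a mixture of two Gaussians with a common covariance `Σ`,
`-(1/4)Σ⁻¹(u₁-u₂)(u₁-u₂)ᵀΣ⁻¹ + Σ⁻¹ ⪯ -∇²log p(x) ⪯ Σ⁻¹`, expressed through the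
second directional derivative of `log p` along an arbitrary direction `v`. -/
theorem gaussian_mixture_hessian_bound (d : ℕ) (u₁ u₂ : Fin d → ℝ)
    (S : Matrix (Fin d) (Fin d) ℝ) (hS : S.PosDef)
    (w₁ w₂ : ℝ) (hw₁ : 0 < w₁) (hw₂ : 0 < w₂) (hw : w₁ + w₂ = 1) :
    ∀ x v : Fin d → ℝ,
      v ⬝ᵥ (S⁻¹ *ᵥ v) - (1 / 4) * (v ⬝ᵥ (S⁻¹ *ᵥ (u₁ - u₂))) ^ 2 ≤
        -(deriv (deriv (fun t : ℝ =>
          Real.log (w₁ * gaussDensity d u₁ S (x + t • v) +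
            w₂ * gaussDensity d u₂ S (x + t • v)))) 0) ∧
      -(deriv (deriv (fun t : ℝ =>
          Real.log (w₁ * gaussDensity d u₁ S (x + t • v) +
            w₂ * gaussDensity d u₂ S (x + t • v)))) 0) ≤ v ⬝ᵥ (S⁻¹ *ᵥ v) := by
  intro x v
  -- symmetry of S⁻¹
  have hsym : S⁻¹ᵀ = S⁻¹ := by
    have := hS.isHermitian.inv
    simpa [Matrix.IsHermitian, Matrix.conjTranspose_eq_transpose_of_trivial] using this
  have hswap : ∀ a : Fin d → ℝ, a ⬝ᵥ (S⁻¹ *ᵥ v) = v ⬝ᵥ (S⁻¹ *ᵥ a) := by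
    intro a
    rw [Matrix.dotProduct_mulVec]
    conv_lhs => rw [← hsym]
    rw [Matrix.vecMul_transpose, dotProduct_comm]
  set Q : ℝ := v ⬝ᵥ (S⁻¹ *ᵥ v) with hQ
  set a₁ : Fin d → ℝ := x - u₁ with ha₁
  set a₂ : Fin d → ℝ := x - u₂ with ha₂
  set b₁ : ℝ := v ⬝ᵥ (S⁻¹ *ᵥ a₁) with hb₁
  set b₂ : ℝ := v ⬝ᵥ (S⁻¹ *ᵥ a₂) with hb₂
  set C : ℝ := (2 * Real.pi) ^ (-(d : ℝ) / 2) * S.det ^ (-(1 : ℝ) / 2) with hC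
  have hCpos : 0 < C := by
    have h2pi : (0:ℝ) < 2 * Real.pi := by positivity
    have hdet : 0 < S.det := hS.det_pos
    exact mul_pos (Real.rpow_pos_of_pos h2pi _) (Real.rpow_pos_of_pos hdet _)
  set B₁ : ℝ := w₁ * (C * Real.exp (-(a₁ ⬝ᵥ (S⁻¹ *ᵥ a₁)) / 2)) with hB₁
  set B₂ : ℝ := w₂ * (C * Real.exp (-(a₂ ⬝ᵥ (S⁻¹ *ᵥ a₂)) / 2)) with hB₂
  have hB₁pos : 0 < B₁ := by positivity
  have hB₂pos : 0 < B₂ := by positivity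
  -- quadratic expansion
  have hquad : ∀ (a : Fin d → ℝ) (t : ℝ),
      (a + t • v) ⬝ᵥ (S⁻¹ *ᵥ (a + t • v))
        = a ⬝ᵥ (S⁻¹ *ᵥ a) + 2 * (v ⬝ᵥ (S⁻¹ *ᵥ a)) * t + Q * t ^ 2 := by
    intro a t
    rw [Matrix.mulVec_add, Matrix.mulVec_smul, dotProduct_add, add_dotProduct,
      add_dotProduct, dotProduct_smul, dotProduct_smul, smul_dotProduct,
      smul_dotProduct, hswap a]
    simp only [smul_eq_mul]
    ring
  -- pointwise identity for the density
  have hpt : ∀ t : ℝ, w₁ * gaussDensity d u₁ S (x + t • v) +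
      w₂ * gaussDensity d u₂ S (x + t • v)
      = Real.exp (-(Q * t ^ 2 / 2)) * (B₁ * Real.exp (-(b₁ * t)) + B₂ * Real.exp (-(b₂ * t))) := by
    intro t
    have hx₁ : x + t • v - u₁ = a₁ + t • v := by rw [ha₁, add_sub_right_comm]
    have hx₂ : x + t • v - u₂ = a₂ + t • v := by rw [ha₂, add_sub_right_comm]
    unfold gaussDensity
    rw [hx₁, hx₂, hquad a₁ t, hquad a₂ t]
    rw [show -(a₁ ⬝ᵥ (S⁻¹ *ᵥ a₁) + 2 * (v ⬝ᵥ (S⁻¹ *ᵥ a₁)) * t + Q * t ^ 2) / 2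
        = -(a₁ ⬝ᵥ (S⁻¹ *ᵥ a₁)) / 2 + (-(b₁ * t) + -(Q * t ^ 2 / 2)) by rw [hb₁]; ring,
      show -(a₂ ⬝ᵥ (S⁻¹ *ᵥ a₂) + 2 * (v ⬝ᵥ (S⁻¹ *ᵥ a₂)) * t + Q * t ^ 2) / 2
        = -(a₂ ⬝ᵥ (S⁻¹ *ᵥ a₂)) / 2 + (-(b₂ * t) + -(Q * t ^ 2 / 2)) by rw [hb₂]; ring]
    simp only [Real.exp_add]
    rw [hB₁, hB₂, hC]
    ring
  -- rewrite the log of the mixture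
  have hfun : (fun t : ℝ => Real.log (w₁ * gaussDensity d u₁ S (x + t • v) +
      w₂ * gaussDensity d u₂ S (x + t • v)))
      = fun t : ℝ => -(Q * t ^ 2 / 2) +
        Real.log (B₁ * Real.exp (-(b₁ * t)) + B₂ * Real.exp (-(b₂ * t))) := by
    funext t
    rw [hpt t]
    have hpos : (0:ℝ) < B₁ * Real.exp (-(b₁ * t)) + B₂ * Real.exp (-(b₂ * t)) := by positivity
    rw [Real.log_mul (Real.exp_ne_zero _) hpos.ne', Real.log_exp]
  rw [hfun, key Q b₁ b₂ B₁ B₂ hB₁pos hB₂pos]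
  -- final algebraic bounds
  have hbb : (b₁ - b₂) ^ 2 = (v ⬝ᵥ (S⁻¹ *ᵥ (u₁ - u₂))) ^ 2 := by
    have : b₁ - b₂ = -(v ⬝ᵥ (S⁻¹ *ᵥ (u₁ - u₂))) := by
      rw [hb₁, hb₂, ha₁, ha₂, ← dotProduct_sub, ← Matrix.mulVec_sub, ← dotProduct_neg,
        ← Matrix.mulVec_neg]
      congr 2
      abel
    rw [this, neg_sq]
  set E : ℝ := v ⬝ᵥ (S⁻¹ *ᵥ (u₁ - u₂)) with hE
  rw [hbb]
  have hsumpos : (0:ℝ) < (B₁ + B₂) ^ 2 := by nlinarith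
  have h4 : 4 * (B₁ * B₂) ≤ (B₁ + B₂) ^ 2 := by nlinarith [sq_nonneg (B₁ - B₂)]
  have hnum : 0 ≤ B₁ * B₂ * E ^ 2 :=
    mul_nonneg (mul_nonneg hB₁pos.le hB₂pos.le) (sq_nonneg E)
  have hkey : B₁ * B₂ * E ^ 2 / (B₁ + B₂) ^ 2 ≤ 1 / 4 * E ^ 2 := by
    rw [div_le_iff₀ hsumpos]
    nlinarith [sq_nonneg E]
  have hkey0 : 0 ≤ B₁ * B₂ * E ^ 2 / (B₁ + B₂) ^ 2 := div_nonneg hnum hsumpos.le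
  constructor
  · linarith
  · linarith
end
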